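/- arXiv:1607.05262 — 3 statements merged into one kernel-verified Lean document; each statement's English description precedes it below -/
import Mathlib

section
/- The function x ↦ (1/x − 1)/ln x is strictly increasing on (0, 1). -/
open Real Set

theorem hasDerivAt_one_div_sub_one_div_log {x : ℝ} (hx : x ≠ 0) (hlog : log x ≠ 0) :
    HasDerivAt (fun x : ℝ => (1 / x - 1) / log x) ((x - 1 - log x) / (x ^ 2 * log x ^ 2)) x := by
  have hnum : HasDerivAt (fun x : ℝ => 1 / x - 1) (-(x ^ 2)⁻¹) x := by
    simpa only [one_div] using (hasDerivAt_inv hx).sub_const 1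
  refine (hnum.div (hasDerivAt_log hx) hlog).congr_deriv ?_
  field_simp
  ring

theorem sub_one_sub_log_div_pos {x : ℝ} (hx : 0 < x) (hx1 : x ≠ 1) :
    0 < (x - 1 - log x) / (x ^ 2 * log x ^ 2) := by
  have hlog : log x ≠ 0 := log_ne_zero_of_pos_of_ne_one hx hx1
  have hlog_lt : log x < x - 1 := log_lt_sub_one_of_pos hx hx1
  exact div_pos (by linarith) (by positivity)

/-- `x ↦ (1/x − 1)/ln x` is strictly increasing on `(0, 1)`. -/
theorem psi_strictMonoOn :
    StrictMonoOn (fun x : ℝ => (1 / x - 1) / Real.log x) (Set.Ioo (0 : ℝ) 1) := by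
  have hderiv : ∀ x ∈ Ioo (0 : ℝ) 1, HasDerivAt (fun x : ℝ => (1 / x - 1) / log x)
      ((x - 1 - log x) / (x ^ 2 * log x ^ 2)) x := fun x hx =>
    hasDerivAt_one_div_sub_one_div_log hx.1.ne' (log_neg hx.1 hx.2).ne
  refine strictMonoOn_of_hasDerivWithinAt_pos
      (f' := fun x => (x - 1 - log x) / (x ^ 2 * log x ^ 2)) (convex_Ioo 0 1)
      (fun x hx => (hderiv x hx).continuousAt.continuousWithinAt) ?_ ?_ <;>
    rw [interior_Ioo]
  · exact fun x hx => (hderiv x hx).hasDerivWithinAt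
  · exact fun x hx => sub_one_sub_log_div_pos hx.1 hx.2.ne
end

section
/- For constants γ₊ ≥ 0 and γ₋ ≥ 0 with γ₊ + γ₋ > 0, the function h(x) = (γ₋·x + γ₊/x − (γ₊ + γ₋))/ln x is strictly increasing on (0, 1). -/
/-- For `γ₊ ≥ 0`, `γ₋ ≥ 0` with `γ₊ + γ₋ > 0`, the function
`h(x) = (γ₋ x + γ₊/x − (γ₊+γ₋))/ln x` is strictly increasing on `(0,1)`. -/
theorem h_strictMonoOn (γp γm : ℝ) (hγp : 0 ≤ γp) (hγm : 0 ≤ γm)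
    (hpos : 0 < γp + γm) :
    StrictMonoOn
      (fun x : ℝ => (γm * x + γp / x - (γp + γm)) / Real.log x)
      (Set.Ioo (0 : ℝ) 1) := by
  have key : ∀ x ∈ Set.Ioo (0:ℝ) 1,
      HasDerivAt (fun x : ℝ => (γm * x + γp / x - (γp + γm)) / Real.log x)
        (((γm + γp * -(x ^ 2)⁻¹) * Real.log x
            - (γm * x + γp / x - (γp + γm)) * x⁻¹) / (Real.log x) ^ 2) x := by
    rintro x ⟨hx0, hx1⟩
    have hx0' : x ≠ 0 := ne_of_gt hx0
    have hlog : Real.log x ≠ 0 := ne_of_lt (Real.log_neg hx0 hx1)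
    have hN : HasDerivAt (fun x : ℝ => γm * x + γp / x - (γp + γm))
        (γm + γp * -(x ^ 2)⁻¹) x := by
      have h1 : HasDerivAt (fun x : ℝ => γm * x) γm x := by
        simpa using (hasDerivAt_id x).const_mul γm
      have h2 : HasDerivAt (fun x : ℝ => γp / x) (γp * -(x ^ 2)⁻¹) x := by
        simpa [div_eq_mul_inv] using (hasDerivAt_inv hx0').const_mul γp
      simpa using (h1.add h2).sub_const (γp + γm)
    exact hN.div (Real.hasDerivAt_log hx0') hlog
  have deriv_pos : ∀ x ∈ Set.Ioo (0:ℝ) 1,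
      0 < ((γm + γp * -(x ^ 2)⁻¹) * Real.log x
            - (γm * x + γp / x - (γp + γm)) * x⁻¹) / (Real.log x) ^ 2 := by
    rintro x ⟨hx0, hx1⟩
    have hx0' : x ≠ 0 := ne_of_gt hx0
    have hlogneg : Real.log x < 0 := Real.log_neg hx0 hx1
    have hlog2 : 0 < (Real.log x) ^ 2 := by nlinarith
    apply div_pos _ hlog2
    have hA : 0 < Real.log x - 1 + 1/x := by
      have h := Real.log_lt_sub_one_of_pos (x := x⁻¹) (by positivity)
        (by simp [hx0']; intro h; rw [h] at hx1; linarith)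
      rw [Real.log_inv] at h
      have : 1/x = x⁻¹ := one_div x
      nlinarith
    have hB : 0 < x - 1 - Real.log x := by
      have h := Real.log_lt_sub_one_of_pos hx0 (ne_of_lt hx1)
      linarith
    have hxsq : 0 < x ^ 2 := by positivity
    have hrw : (γm + γp * -(x ^ 2)⁻¹) * Real.log x
            - (γm * x + γp / x - (γp + γm)) * x⁻¹
          = γm * (Real.log x - 1 + 1/x) + γp * (x - 1 - Real.log x) / x ^ 2 := by
      field_simp
      ring
    rw [hrw]
    rcases lt_or_ge 0 γm with hm | hm
    · have : 0 ≤ γp * (x - 1 - Real.log x) / x ^ 2 := by positivity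
      nlinarith
    · have hγm0 : γm = 0 := le_antisymm hm hγm
      have hγp0 : 0 < γp := by linarith
      have : 0 < γp * (x - 1 - Real.log x) / x ^ 2 := by positivity
      nlinarith
  apply strictMonoOn_of_deriv_pos (convex_Ioo 0 1)
  · intro x hx
    exact ((key x hx).continuousAt).continuousWithinAt
  · intro x hx
    rw [interior_Ioo] at hx
    rw [(key x hx).deriv]
    exact deriv_pos x hx
end

section
/- Fix constants γ₊ ≥ 0, γ₋ > 0, μ ∈ ℝ, and define f(x) = γ₋ x + γ₊ ln x, G(x) = γ₋ ln x − γ₊/x, Δ(x) = γ₊ + γ₋ − γ₊/x − γ₋ x + (γ₋ − γ₊ − μ)·ln x, and h(x) = (γ₋ x + γ₊/x − (γ₊+γ₋))/ln x for x ∈ (0,1). Let (z_n)_{n≥0} be a sequence in (0,1] satisfying 2·(f(z_1) − f(z_0)) = Δ(z_0) and, for all n ≥ 1, (n+2)·(f(z_{n+1}) − f(z_n)) = n·(G(z_n) − G(z_{n−1})) + Δ(z_n). If z_0 ∈ (0,1) and h(z_0) > γ₋ − γ₊ − μ, then (z_n) is strictly increasing: z_0 < z_1 < z_2 < .... -/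
noncomputable def f (γp γm x : ℝ) : ℝ := γm * x + γp * Real.log x
noncomputable def G (γp γm x : ℝ) : ℝ := γm * Real.log x - γp / x
noncomputable def Δ (γp γm μ x : ℝ) : ℝ :=
  γp + γm - γp / x - γm * x + (γm - γp - μ) * Real.log x
noncomputable def h (γp γm x : ℝ) : ℝ := (γm * x + γp / x - (γp + γm)) / Real.log x

/-! Induction on `n`, carrying `z 0 ≤ z n < z (n + 1)`. Since `h` is increasing on `(0,1)`,
`z 0 ≤ z n` and `h (z 0) > γ₋ − γ₊ − μ` give `Δ (z n) ≥ 0` (with `Δ (z 0) > 0`). As `G` is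
increasing, the right-hand side of the recursion is then positive, so `f (z (n+1)) > f (z n)`,
and `f` is increasing. -/

open Real Set

lemma one_sub_inv_lt_log {x : ℝ} (hx : 0 < x) (hx1 : x ≠ 1) : 1 - x⁻¹ < log x := by
  have := log_lt_sub_one_of_pos (inv_pos.2 hx) (inv_ne_one.2 hx1)
  rw [log_inv] at this
  linarith

section

variable {γp γm : ℝ} (hγp : 0 ≤ γp) (hγm : 0 < γm)
include hγp hγm

lemma f_strictMonoOn : StrictMonoOn (f γp γm) (Ioi 0) := fun _ ha _ _ hab =>
  add_lt_add_of_lt_of_le (mul_lt_mul_of_pos_left hab hγm)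
    (mul_le_mul_of_nonneg_left (log_le_log ha hab.le) hγp)

lemma G_strictMonoOn : StrictMonoOn (G γp γm) (Ioi 0) := fun _ ha _ _ hab =>
  (sub_lt_sub_right (mul_lt_mul_of_pos_left (log_lt_log ha hab) hγm) _).trans_le
    (sub_le_sub_left (div_le_div_of_nonneg_left hγp ha hab.le) _)

end

lemma h_hasDerivAt (γp γm : ℝ) {x : ℝ} (hx : 0 < x) (hx1 : x ≠ 1) :
    HasDerivAt (h γp γm)
      ((γm * (log x - (1 - x⁻¹)) + γp / x ^ 2 * (x - 1 - log x)) / log x ^ 2) x := by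
  have hlog : log x ≠ 0 := log_ne_zero_of_pos_of_ne_one hx hx1
  have hnum : HasDerivAt (fun y => γm * y + γp / y - (γp + γm)) (γm + γp * -(x ^ 2)⁻¹) x := by
    simpa [div_eq_mul_inv] using
      (((hasDerivAt_id x).const_mul γm).add ((hasDerivAt_inv hx.ne').const_mul γp)).sub_const
        (γp + γm)
  refine (hnum.div (hasDerivAt_log hx.ne') hlog).congr_deriv ?_
  field_simp
  ring

lemma h_strictMonoOn_s12 {γp γm : ℝ} (hγp : 0 ≤ γp) (hγm : 0 < γm) :
    StrictMonoOn (h γp γm) (Ioo 0 1) := by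
  refine strictMonoOn_of_deriv_pos (convex_Ioo 0 1)
    (fun x hx => (h_hasDerivAt γp γm hx.1 hx.2.ne).continuousAt.continuousWithinAt) ?_
  rw [interior_Ioo]
  rintro x ⟨hx0, hx1⟩
  rw [(h_hasDerivAt γp γm hx0 hx1.ne).deriv]
  have hlog : log x < 0 := log_neg hx0 hx1
  have hm : 0 < log x - (1 - x⁻¹) := sub_pos.2 (one_sub_inv_lt_log hx0 hx1.ne)
  have hp : 0 < x - 1 - log x := by linarith [log_lt_sub_one_of_pos hx0 hx1.ne]
  exact div_pos (by positivity) (sq_pos_of_neg hlog)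

lemma Δ_eq_mul_log (γp γm μ : ℝ) {x : ℝ} (hlog : log x ≠ 0) :
    Δ γp γm μ x = (γm - γp - μ - h γp γm x) * log x := by
  have hx : x ≠ 0 := by rintro rfl; simp at hlog
  simp only [Δ, h]
  field_simp
  ring

lemma Δ_pos_of_lt_h {γp γm μ x : ℝ} (hx : x ∈ Ioo 0 1) (hlt : γm - γp - μ < h γp γm x) :
    0 < Δ γp γm μ x := by
  have hlog : log x < 0 := log_neg hx.1 hx.2
  rw [Δ_eq_mul_log γp γm μ hlog.ne]
  exact mul_pos_of_neg_of_neg (by linarith) hlog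

lemma Δ_nonneg_of_ge {γp γm μ x₀ x : ℝ} (hγp : 0 ≤ γp) (hγm : 0 < γm) (hx₀ : x₀ ∈ Ioo 0 1)
    (hh : γm - γp - μ < h γp γm x₀) (hx : x ∈ Ioc 0 1) (hle : x₀ ≤ x) :
    0 ≤ Δ γp γm μ x := by
  rcases hx.2.lt_or_eq with hx1 | rfl
  · exact (Δ_pos_of_lt_h ⟨hx.1, hx1⟩
      (hh.trans_le ((h_strictMonoOn_s12 hγp hγm).monotoneOn hx₀ ⟨hx.1, hx1⟩ hle))).le
  · simp [Δ]

/-- Monotonicity lemma (strictly increasing case): if `z_0 ∈ (0,1)` and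
`h(z_0) > γ₋ − γ₊ − μ`, any solution of the Lagrange recursion is strictly
increasing. -/
theorem zseq_strictMono (γp γm μ : ℝ) (hγp : 0 ≤ γp) (hγm : 0 < γm)
    (z : ℕ → ℝ) (hz : ∀ n, z n ∈ Set.Ioc (0 : ℝ) 1)
    (hrec0 : 2 * (f γp γm (z 1) - f γp γm (z 0)) = Δ γp γm μ (z 0))
    (hrec : ∀ n : ℕ, 1 ≤ n →
      ((n : ℝ) + 2) * (f γp γm (z (n + 1)) - f γp γm (z n))
        = (n : ℝ) * (G γp γm (z n) - G γp γm (z (n - 1))) + Δ γp γm μ (z n))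
    (hz0 : z 0 ∈ Set.Ioo (0 : ℝ) 1)
    (hh : h γp γm (z 0) > γm - γp - μ) :
    StrictMono z := by
  have lt_succ_of_mul_pos : ∀ n (k : ℝ), 0 < k → 0 < k * (f γp γm (z (n + 1)) - f γp γm (z n)) →
      z n < z (n + 1) := fun n k hk hpos =>
    (f_strictMonoOn hγp hγm).lt_iff_lt (hz n).1 (hz (n + 1)).1 |>.1
      (sub_pos.1 (pos_of_mul_pos_right hpos hk.le))
  have ge_z0_and_lt_succ : ∀ n, z 0 ≤ z n ∧ z n < z (n + 1) := by
    intro n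
    induction n with
    | zero => exact ⟨le_rfl, lt_succ_of_mul_pos 0 2 two_pos (hrec0 ▸ Δ_pos_of_lt_h hz0 hh)⟩
    | succ n ih =>
      have hle : z 0 ≤ z (n + 1) := ih.1.trans ih.2.le
      have hG := G_strictMonoOn hγp hγm (hz n).1 (hz (n + 1)).1 ih.2
      have hΔ := Δ_nonneg_of_ge hγp hγm hz0 hh (hz (n + 1)) hle
      refine ⟨hle, lt_succ_of_mul_pos (n + 1) ((n + 1 : ℕ) + 2) (by positivity) ?_⟩
      rw [hrec (n + 1) n.succ_pos, Nat.add_sub_cancel]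
      have : 0 < ((n + 1 : ℕ) : ℝ) * (G γp γm (z (n + 1)) - G γp γm (z n)) :=
        mul_pos (by positivity) (sub_pos.2 hG)
      linarith
  exact strictMono_nat_of_lt_succ fun n => (ge_z0_and_lt_succ n).2
end
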